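/- arXiv:2209.02621 — 2 statements merged into one kernel-verified Lean document; each statement's English description precedes it below -/
import Mathlib

section
/- For any two quantum instruments I₁ ∈ In(Ω₁,H,K₁) and I₂ ∈ In(Ω₂,H,K₂), the generalized incompatibility robustness satisfies R_I(I₁,I₂) ≤ 1. In particular, for fixed pure states η₁ ∈ S(K₁), η₂ ∈ S(K₂), the instruments with operations (Φ¹_x(ρ) + tr(ρ)η₁/|Ω₁|)/2 and (Φ²_y(ρ) + tr(ρ)η₂/|Ω₂|)/2 are parallel compatible. -/
open Matrix
open scoped Kronecker BigOperators ComplexOrder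

noncomputable section

namespace QI

/-- Linear maps between matrix algebras (superoperators). -/
abbrev MatMap (n m : Type*) [Fintype n] [Fintype m] :=
  Matrix n n ℂ →ₗ[ℂ] Matrix m m ℂ

variable {n m m₁ m₂ ι ι₁ ι₂ : Type*}

/-- The Choi matrix of a superoperator. -/
def choi [Fintype n] [DecidableEq n] [Fintype m] (Φ : MatMap n m) :
    Matrix (n × m) (n × m) ℂ :=
  Matrix.of fun p q => Φ (Matrix.single p.1 q.1 1) p.2 q.2

/-- Complete positivity, via positive semidefiniteness of the Choi matrix. -/
def IsCP [Fintype n] [DecidableEq n] [Fintype m] (Φ : MatMap n m) : Prop :=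
  (choi Φ).PosSemidef

/-- Trace preserving map. -/
def IsTP [Fintype n] [Fintype m] (Φ : MatMap n m) : Prop :=
  ∀ ρ, (Φ ρ).trace = ρ.trace

/-- Trace non-increasing map (on positive semidefinite inputs). -/
def IsTNI [Fintype n] [Fintype m] (Φ : MatMap n m) : Prop :=
  ∀ ρ : Matrix n n ℂ, ρ.PosSemidef → (Φ ρ).trace.re ≤ ρ.trace.re

/-- A quantum channel: CP and trace preserving. -/
def IsChannel [Fintype n] [DecidableEq n] [Fintype m] (Φ : MatMap n m) : Prop :=
  IsCP Φ ∧ IsTP Φ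

/-- A quantum instrument: a finite family of CP maps summing to a TP map. -/
structure Instrument (ι n m : Type*) [Fintype ι] [Fintype n] [DecidableEq n] [Fintype m] where
  op : ι → MatMap n m
  cp : ∀ x, IsCP (op x)
  tp : IsTP (∑ x, op x)

/-- Partial trace over the second tensor factor, as a linear map. -/
def ptrace₂ [Fintype m₁] [Fintype m₂] :
    Matrix (m₁ × m₂) (m₁ × m₂) ℂ →ₗ[ℂ] Matrix m₁ m₁ ℂ where
  toFun M := Matrix.of fun i j => ∑ k, M (i, k) (j, k)
  map_add' M N := by ext i j; simp [Finset.sum_add_distrib]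
  map_smul' c M := by ext i j; simp [Finset.mul_sum]

/-- Partial trace over the first tensor factor, as a linear map. -/
def ptrace₁ [Fintype m₁] [Fintype m₂] :
    Matrix (m₁ × m₂) (m₁ × m₂) ℂ →ₗ[ℂ] Matrix m₂ m₂ ℂ where
  toFun M := Matrix.of fun i j => ∑ k, M (k, i) (k, j)
  map_add' M N := by ext i j; simp [Finset.sum_add_distrib]
  map_smul' c M := by ext i j; simp [Finset.mul_sum]

/-- Parallel compatibility of two instruments. -/
def ParallelCompatible [Fintype ι₁] [Fintype ι₂] [Fintype n] [DecidableEq n]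
    [Fintype m₁] [Fintype m₂]
    (I₁ : Instrument ι₁ n m₁) (I₂ : Instrument ι₂ n m₂) : Prop :=
  ∃ J : Instrument (ι₁ × ι₂) n (m₁ × m₂),
    (∀ x, ∑ y, ptrace₂ ∘ₗ J.op (x, y) = I₁.op x) ∧
    (∀ y, ∑ x, ptrace₁ ∘ₗ J.op (x, y) = I₂.op y)

/-- The dual (Heisenberg picture) of a superoperator, characterized by
`tr[Φ(ρ) M] = tr[ρ Φ*(M)]`. -/
def dualMap [Fintype n] [DecidableEq n] [Fintype m] (Φ : MatMap n m) (M : Matrix m m ℂ) :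
    Matrix n n ℂ :=
  Matrix.of fun i j => (Φ (Matrix.single j i 1) * M).trace

/-- A POVM: positive semidefinite effects summing to the identity. -/
def IsPOVM [Fintype n] [DecidableEq n] (A : ι → Matrix n n ℂ) [Fintype ι] : Prop :=
  (∀ x, (A x).PosSemidef) ∧ ∑ x, A x = 1

/-- The POVM induced by an instrument: `A(x) = Φ_x*(𝟙)`. -/
def inducedPOVM [Fintype ι] [Fintype n] [DecidableEq n] [Fintype m] [DecidableEq m]
    (I : Instrument ι n m) (x : ι) : Matrix n n ℂ :=
  dualMap (I.op x) 1

/-- Compatibility of two POVMs via a joint POVM. -/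
def POVMsCompatible [Fintype ι₁] [Fintype ι₂] [Fintype n] [DecidableEq n]
    (A₁ : ι₁ → Matrix n n ℂ) (A₂ : ι₂ → Matrix n n ℂ) : Prop :=
  ∃ G : ι₁ × ι₂ → Matrix n n ℂ, IsPOVM G ∧
    (∀ x, ∑ y, G (x, y) = A₁ x) ∧ (∀ y, ∑ x, G (x, y) = A₂ y)

/-- Compatibility of two channels via a joint channel. -/
def ChannelsCompatible [Fintype n] [DecidableEq n] [Fintype m₁] [Fintype m₂]
    (Φ₁ : MatMap n m₁) (Φ₂ : MatMap n m₂) : Prop :=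
  ∃ Λ : MatMap n (m₁ × m₂), IsChannel Λ ∧
    ptrace₂ ∘ₗ Λ = Φ₁ ∧ ptrace₁ ∘ₗ Λ = Φ₂

/-- Generalized incompatibility robustness of a pair of instruments. -/
def RI [Fintype ι₁] [Fintype ι₂] [Fintype n] [DecidableEq n]
    [Fintype m₁] [Fintype m₂]
    (I₁ : Instrument ι₁ n m₁) (I₂ : Instrument ι₂ n m₂) : ℝ :=
  sInf {r : ℝ | 0 ≤ r ∧
    ∃ (N₁ : Instrument ι₁ n m₁) (N₂ : Instrument ι₂ n m₂)
      (J : Instrument (ι₁ × ι₂) n (m₁ × m₂)),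
      (∀ x, ((1 + r : ℝ) : ℂ)⁻¹ • (I₁.op x + (r : ℂ) • N₁.op x)
          = ∑ y, ptrace₂ ∘ₗ J.op (x, y)) ∧
      (∀ y, ((1 + r : ℝ) : ℂ)⁻¹ • (I₂.op y + (r : ℂ) • N₂.op y)
          = ∑ x, ptrace₁ ∘ₗ J.op (x, y))}

/-- Generalized incompatibility robustness of a pair of POVMs. -/
def RM [Fintype ι₁] [Fintype ι₂] [Fintype n] [DecidableEq n]
    (A₁ : ι₁ → Matrix n n ℂ) (A₂ : ι₂ → Matrix n n ℂ) : ℝ :=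
  sInf {r : ℝ | 0 ≤ r ∧
    ∃ (B₁ : ι₁ → Matrix n n ℂ) (B₂ : ι₂ → Matrix n n ℂ) (G : ι₁ × ι₂ → Matrix n n ℂ),
      IsPOVM B₁ ∧ IsPOVM B₂ ∧ (∀ p, (G p).PosSemidef) ∧
      (∀ x, ((1 + r : ℝ) : ℂ)⁻¹ • (A₁ x + (r : ℂ) • B₁ x) = ∑ y, G (x, y)) ∧
      (∀ y, ((1 + r : ℝ) : ℂ)⁻¹ • (A₂ y + (r : ℂ) • B₂ y) = ∑ x, G (x, y))}

/-- Generalized incompatibility robustness of a pair of channels. -/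
def RC [Fintype n] [DecidableEq n] [Fintype m₁] [Fintype m₂]
    (Φ₁ : MatMap n m₁) (Φ₂ : MatMap n m₂) : ℝ :=
  sInf {r : ℝ | 0 ≤ r ∧
    ∃ (N₁ : MatMap n m₁) (N₂ : MatMap n m₂) (Λ : MatMap n (m₁ × m₂)),
      IsChannel N₁ ∧ IsChannel N₂ ∧ IsChannel Λ ∧
      ((1 + r : ℝ) : ℂ)⁻¹ • (Φ₁ + (r : ℂ) • N₁) = ptrace₂ ∘ₗ Λ ∧
      ((1 + r : ℝ) : ℂ)⁻¹ • (Φ₂ + (r : ℂ) • N₂) = ptrace₁ ∘ₗ Λ}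

/-- Post-processing relation on instruments: `I₂ ≲ I₁`. -/
def PostProcessingOf [Fintype ι₁] [Fintype ι₂] [Fintype n] [DecidableEq n]
    [Fintype m₁] [DecidableEq m₁] [Fintype m₂]
    (I₂ : Instrument ι₂ n m₂) (I₁ : Instrument ι₁ n m₁) : Prop :=
  ∃ R : ι₁ → Instrument ι₂ m₁ m₂,
    ∀ y, I₂.op y = ∑ x, (R x).op y ∘ₗ I₁.op x

/-- A density matrix (quantum state). -/
def IsState [Fintype m] (η : Matrix m m ℂ) : Prop :=
  η.PosSemidef ∧ η.trace = 1

/-- A pure state. -/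
def IsPureState [Fintype m] (η : Matrix m m ℂ) : Prop :=
  ∃ v : m → ℂ, (∑ i, star (v i) * v i) = 1 ∧ η = Matrix.vecMulVec v (star v)

/-- The trash-and-prepare map `ρ ↦ tr(ρ) • η`. -/
def trashPrep [Fintype n] [Fintype m] (η : Matrix m m ℂ) : MatMap n m :=
  (Matrix.traceLinearMap n ℂ ℂ).smulRight η

/-- Tensoring with a fixed matrix on the right, as a linear map. -/
def kronRight [Fintype m₁] [Fintype m₂] (B : Matrix m₂ m₂ ℂ) :
    Matrix m₁ m₁ ℂ →ₗ[ℂ] Matrix (m₁ × m₂) (m₁ × m₂) ℂ where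
  toFun A := A ⊗ₖ B
  map_add' A A' := by ext ⟨i, k⟩ ⟨j, l⟩; simp [Matrix.kroneckerMap_apply, add_mul]
  map_smul' c A := by ext ⟨i, k⟩ ⟨j, l⟩; simp [Matrix.kroneckerMap_apply, mul_assoc]

/-- Tensoring with a fixed matrix on the left, as a linear map. -/
def kronLeft [Fintype m₁] [Fintype m₂] (A : Matrix m₁ m₁ ℂ) :
    Matrix m₂ m₂ ℂ →ₗ[ℂ] Matrix (m₁ × m₂) (m₁ × m₂) ℂ where
  toFun B := A ⊗ₖ B
  map_add' B B' := by ext ⟨i, k⟩ ⟨j, l⟩; simp [Matrix.kroneckerMap_apply, mul_add]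
  map_smul' c B := by
    ext ⟨i, k⟩ ⟨j, l⟩
    simp only [Matrix.kroneckerMap_apply, Matrix.smul_apply, smul_eq_mul, RingHom.id_apply]
    ring

/-- Measure-and-prepare operation: `ρ ↦ tr(ρ A) • σ`. -/
def mpOp [Fintype n] [Fintype m] (A : Matrix n n ℂ) (σ : Matrix m m ℂ) : MatMap n m where
  toFun ρ := (ρ * A).trace • σ
  map_add' ρ ρ' := by simp [Matrix.add_mul, Matrix.trace_add, add_smul]
  map_smul' c ρ := by simp [Matrix.smul_mul, Matrix.trace_smul, smul_smul]

/-- Conjugation by a Kraus operator: `ρ ↦ K ρ K†`. -/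
def krausOp [Fintype n] [Fintype m] (K : Matrix m n ℂ) : MatMap n m where
  toFun ρ := K * ρ * Kᴴ
  map_add' ρ ρ' := by simp [Matrix.mul_add, Matrix.add_mul]
  map_smul' c ρ := by simp [Matrix.mul_smul, Matrix.smul_mul]

end QI

end

/-! Any instrument `I` is parallel compatible with the instrument `U` that discards its input
and prepares a fixed state `σ` together with a uniformly random outcome: `I.op x ⊗ σ / |ι₂|` is
a joint instrument. Taking partial traces is linear, so the half-half mixture of a joint
instrument for `(I₁, U₂)` with one for `(U₁, I₂)` is a joint instrument for the half-half
mixtures `(I₁ + U₁) / 2` and `(I₂ + U₂) / 2`. These are the noisy instruments at noise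
level `r = 1`, whence `R_I(I₁, I₂) ≤ 1`. -/

noncomputable section

namespace QI

open Matrix
open scoped Kronecker ComplexOrder

variable {ι ι₁ ι₂ n m m₁ m₂ : Type*} [Fintype n] [Fintype m] [Fintype m₁] [Fintype m₂]

lemma trashPrep_apply (σ : Matrix m m ℂ) (ρ : Matrix n n ℂ) :
    trashPrep σ ρ = ρ.trace • σ := rfl

@[simp]
lemma kronRight_apply (B : Matrix m₂ m₂ ℂ) (A : Matrix m₁ m₁ ℂ) : kronRight B A = A ⊗ₖ B := rfl

@[simp]
lemma kronLeft_apply (A : Matrix m₁ m₁ ℂ) (B : Matrix m₂ m₂ ℂ) : kronLeft A B = A ⊗ₖ B := rfl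

lemma ptrace₂_kron (A : Matrix m₁ m₁ ℂ) (B : Matrix m₂ m₂ ℂ) :
    ptrace₂ (A ⊗ₖ B) = B.trace • A := by
  ext i j
  simp [ptrace₂, trace, kroneckerMap_apply, ← Finset.mul_sum, mul_comm]

lemma ptrace₁_kron (A : Matrix m₁ m₁ ℂ) (B : Matrix m₂ m₂ ℂ) :
    ptrace₁ (A ⊗ₖ B) = A.trace • B := by
  ext i j
  simp [ptrace₁, trace, kroneckerMap_apply, ← Finset.sum_mul]

lemma isTP_sum_iff [Fintype ι] (Φ : ι → MatMap n m) :
    IsTP (∑ x, Φ x) ↔ ∀ ρ, ∑ x, (Φ x ρ).trace = ρ.trace := by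
  simp [IsTP, LinearMap.sum_apply, trace_sum]

lemma card_nsmul_inv_card_smul [Fintype ι] [Nonempty ι] {M : Type*} [AddCommMonoid M]
    [Module ℂ M] (a : M) : Fintype.card ι • (Fintype.card ι : ℂ)⁻¹ • a = a := by
  rw [← Nat.cast_smul_eq_nsmul ℂ, smul_smul,
    mul_inv_cancel₀ (Nat.cast_ne_zero.2 Fintype.card_ne_zero), one_smul]

lemma ofReal_inv_one_add_nonneg {r : ℝ} (hr : 0 ≤ r) : (0 : ℂ) ≤ ((1 + r : ℝ) : ℂ)⁻¹ :=
  inv_nonneg.2 (Complex.zero_le_real.2 (by linarith))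

lemma IsPureState.isState {η : Matrix m m ℂ} (h : IsPureState η) : IsState η := by
  obtain ⟨v, hv, rfl⟩ := h
  refine ⟨posSemidef_vecMulVec_self_star v, ?_⟩
  rw [trace_vecMulVec, ← hv, dotProduct]
  simp [mul_comm]

variable [DecidableEq n]

lemma choi_add (Φ Ψ : MatMap n m) : choi (Φ + Ψ) = choi Φ + choi Ψ := by
  ext p q; simp [choi]

lemma choi_smul (c : ℂ) (Φ : MatMap n m) : choi (c • Φ) = c • choi Φ := by
  ext p q; simp [choi]

lemma IsCP.add {Φ Ψ : MatMap n m} (hΦ : IsCP Φ) (hΨ : IsCP Ψ) : IsCP (Φ + Ψ) := by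
  rw [IsCP, choi_add]; exact PosSemidef.add hΦ hΨ

lemma IsCP.smul {c : ℂ} (hc : 0 ≤ c) {Φ : MatMap n m} (hΦ : IsCP Φ) : IsCP (c • Φ) := by
  rw [IsCP, choi_smul]; exact PosSemidef.smul hΦ hc

lemma choi_trashPrep (σ : Matrix m m ℂ) :
    choi (trashPrep σ : MatMap n m) = (1 : Matrix n n ℂ) ⊗ₖ σ := by
  ext ⟨i, a⟩ ⟨j, b⟩
  rcases eq_or_ne i j with rfl | h
  · simp [choi, trashPrep_apply, trace_single_eq_same]
  · simp [choi, trashPrep_apply, trace_single_eq_of_ne (h := h), h]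

lemma isCP_trashPrep {σ : Matrix m m ℂ} (hσ : σ.PosSemidef) : IsCP (trashPrep σ : MatMap n m) := by
  rw [IsCP, choi_trashPrep]; exact PosSemidef.one.kronecker hσ

lemma IsCP.kronRight_comp {B : Matrix m₂ m₂ ℂ} (hB : B.PosSemidef) {Φ : MatMap n m₁}
    (hΦ : IsCP Φ) : IsCP (kronRight B ∘ₗ Φ) := by
  have h : choi (kronRight B ∘ₗ Φ) = (choi Φ ⊗ₖ B).submatrix
      (fun p : n × (m₁ × m₂) => ((p.1, p.2.1), p.2.2)) (fun p => ((p.1, p.2.1), p.2.2)) := by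
    ext ⟨i, a, b⟩ ⟨j, c, d⟩
    simp [choi, kronRight, kroneckerMap_apply]
  rw [IsCP, h]
  exact (hΦ.kronecker hB).submatrix _

lemma IsCP.kronLeft_comp {A : Matrix m₁ m₁ ℂ} (hA : A.PosSemidef) {Φ : MatMap n m₂}
    (hΦ : IsCP Φ) : IsCP (kronLeft A ∘ₗ Φ) := by
  have h : choi (kronLeft A ∘ₗ Φ) = (A ⊗ₖ choi Φ).submatrix
      (fun p : n × (m₁ × m₂) => (p.2.1, (p.1, p.2.2))) (fun p => (p.2.1, (p.1, p.2.2))) := by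
    ext ⟨i, a, b⟩ ⟨j, c, d⟩
    simp [choi, kronLeft, kroneckerMap_apply]
  rw [IsCP, h]
  exact (hA.kronecker hΦ).submatrix _

variable [Fintype ι] [Fintype ι₁] [Fintype ι₂]

@[ext]
lemma Instrument.ext {I J : Instrument ι n m} (h : I.op = J.op) : I = J := by
  cases I; cases J; cases h; rfl

lemma Instrument.sum_trace_op (I : Instrument ι n m) (ρ : Matrix n n ℂ) :
    ∑ x, (I.op x ρ).trace = ρ.trace :=
  (isTP_sum_iff I.op).1 I.tp ρ

def Instrument.noisy (I N : Instrument ι n m) (r : ℝ) (hr : 0 ≤ r) : Instrument ι n m where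
  op x := ((1 + r : ℝ) : ℂ)⁻¹ • (I.op x + (r : ℂ) • N.op x)
  cp x := ((I.cp x).add ((N.cp x).smul (Complex.zero_le_real.2 hr))).smul
    (ofReal_inv_one_add_nonneg hr)
  tp := by
    have h1r : ((1 + r : ℝ) : ℂ) ≠ 0 := Complex.ofReal_ne_zero.2 (by linarith)
    refine (isTP_sum_iff _).2 fun ρ => ?_
    simp only [LinearMap.smul_apply, LinearMap.add_apply, trace_smul, trace_add, smul_eq_mul,
      ← Finset.mul_sum, Finset.sum_add_distrib, I.sum_trace_op, N.sum_trace_op]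
    field_simp
    push_cast
    ring

lemma Instrument.noisy_one_comm (I N : Instrument ι n m) :
    I.noisy N 1 zero_le_one = N.noisy I 1 zero_le_one := by
  ext1; funext x
  simp [Instrument.noisy, add_comm]

def uniformPrep (ι : Type*) [Fintype ι] [Nonempty ι] {σ : Matrix m m ℂ} (hσ : IsState σ) :
    Instrument ι n m where
  op _ := trashPrep ((Fintype.card ι : ℂ)⁻¹ • σ)
  cp _ := isCP_trashPrep (hσ.1.smul (inv_nonneg.2 (Nat.cast_nonneg _)))
  tp := (isTP_sum_iff _).2 fun ρ => by
    simpa [trashPrep_apply, hσ.2, mul_comm] using card_nsmul_inv_card_smul (ι := ι) ρ.trace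

lemma parallelCompatible_uniformPrep_right (I : Instrument ι₁ n m₁) [Nonempty ι₂]
    {σ : Matrix m₂ m₂ ℂ} (hσ : IsState σ) : ParallelCompatible I (uniformPrep ι₂ hσ) := by
  have hc : (Fintype.card ι₂ : ℂ) ≠ 0 := Nat.cast_ne_zero.2 Fintype.card_ne_zero
  refine ⟨{ op := fun p => kronRight ((Fintype.card ι₂ : ℂ)⁻¹ • σ) ∘ₗ I.op p.1
            cp := fun p => (I.cp p.1).kronRight_comp
              (hσ.1.smul (inv_nonneg.2 (Nat.cast_nonneg _)))
            tp := (isTP_sum_iff _).2 fun ρ => ?_ }, fun x => ?_, fun y => ?_⟩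
  · simp [Fintype.sum_prod_type, trace_kronecker, hσ.2]
    field_simp
    exact I.sum_trace_op ρ
  · ext1 ρ
    simp [ptrace₂_kron, hσ.2, card_nsmul_inv_card_smul]
  · ext1 ρ
    simp only [LinearMap.sum_apply, LinearMap.comp_apply, kronRight_apply, ptrace₁_kron,
      ← Finset.sum_smul, I.sum_trace_op]
    rfl

lemma parallelCompatible_uniformPrep_left [Nonempty ι₁] {σ : Matrix m₁ m₁ ℂ} (hσ : IsState σ)
    (I : Instrument ι₂ n m₂) : ParallelCompatible (uniformPrep ι₁ hσ) I := by
  have hc : (Fintype.card ι₁ : ℂ) ≠ 0 := Nat.cast_ne_zero.2 Fintype.card_ne_zero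
  refine ⟨{ op := fun p => kronLeft ((Fintype.card ι₁ : ℂ)⁻¹ • σ) ∘ₗ I.op p.2
            cp := fun p => (I.cp p.2).kronLeft_comp
              (hσ.1.smul (inv_nonneg.2 (Nat.cast_nonneg _)))
            tp := (isTP_sum_iff _).2 fun ρ => ?_ }, fun x => ?_, fun y => ?_⟩
  · simp [Fintype.sum_prod_type, trace_kronecker, hσ.2, ← Finset.mul_sum, I.sum_trace_op, hc]
  · ext1 ρ
    simp only [LinearMap.sum_apply, LinearMap.comp_apply, kronLeft_apply, ptrace₂_kron,
      ← Finset.sum_smul, I.sum_trace_op]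
    rfl
  · ext1 ρ
    simp [ptrace₁_kron, hσ.2, card_nsmul_inv_card_smul]

lemma ParallelCompatible.noisy {A₁ B₁ : Instrument ι₁ n m₁} {A₂ B₂ : Instrument ι₂ n m₂}
    (hA : ParallelCompatible A₁ A₂) (hB : ParallelCompatible B₁ B₂) {r : ℝ} (hr : 0 ≤ r) :
    ParallelCompatible (A₁.noisy B₁ r hr) (A₂.noisy B₂ r hr) := by
  obtain ⟨J, hJ₁, hJ₂⟩ := hA
  obtain ⟨K, hK₁, hK₂⟩ := hB
  refine ⟨J.noisy K r hr, fun x => ?_, fun y => ?_⟩ <;>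
  simp only [Instrument.noisy, LinearMap.comp_add, LinearMap.comp_smul, Finset.sum_add_distrib,
    ← Finset.smul_sum, hJ₁, hJ₂, hK₁, hK₂]

lemma RI_le_of_parallelCompatible_noisy {I₁ N₁ : Instrument ι₁ n m₁}
    {I₂ N₂ : Instrument ι₂ n m₂} {r : ℝ} (hr : 0 ≤ r)
    (h : ParallelCompatible (I₁.noisy N₁ r hr) (I₂.noisy N₂ r hr)) : RI I₁ I₂ ≤ r := by
  obtain ⟨J, hJ₁, hJ₂⟩ := h
  exact csInf_le ⟨0, fun _ hs => hs.1⟩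
    ⟨hr, N₁, N₂, J, fun x => (hJ₁ x).symm, fun y => (hJ₂ y).symm⟩

end QI

end

open QI in
/-- `R_I(I₁,I₂) ≤ 1`, witnessed by admixing trash-and-prepare noise. -/
theorem RI_le_one {ι₁ ι₂ n m₁ m₂ : Type*}
    [Fintype ι₁] [Nonempty ι₁] [Fintype ι₂] [Nonempty ι₂]
    [Fintype n] [DecidableEq n] [Fintype m₁] [Fintype m₂]
    (I₁ : Instrument ι₁ n m₁) (I₂ : Instrument ι₂ n m₂)
    (η₁ : Matrix m₁ m₁ ℂ) (η₂ : Matrix m₂ m₂ ℂ)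
    (h₁ : IsPureState η₁) (h₂ : IsPureState η₂) :
    RI I₁ I₂ ≤ 1 ∧
    ∃ (N₁ : Instrument ι₁ n m₁) (N₂ : Instrument ι₂ n m₂),
      (∀ x, N₁.op x
        = (2 : ℂ)⁻¹ • (I₁.op x + trashPrep ((Fintype.card ι₁ : ℂ)⁻¹ • η₁))) ∧
      (∀ y, N₂.op y
        = (2 : ℂ)⁻¹ • (I₂.op y + trashPrep ((Fintype.card ι₂ : ℂ)⁻¹ • η₂))) ∧
      ParallelCompatible N₁ N₂ := by
  have hU₁ := parallelCompatible_uniformPrep_left (ι₁ := ι₁) h₁.isState I₂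
  have hU₂ := parallelCompatible_uniformPrep_right (ι₂ := ι₂) I₁ h₂.isState
  have hN : ParallelCompatible (I₁.noisy (uniformPrep ι₁ h₁.isState) 1 zero_le_one)
      (I₂.noisy (uniformPrep ι₂ h₂.isState) 1 zero_le_one) := by
    rw [Instrument.noisy_one_comm I₂]
    exact hU₂.noisy hU₁ zero_le_one
  refine ⟨RI_le_of_parallelCompatible_noisy zero_le_one hN, _, _, fun x => ?_, fun y => ?_, hN⟩
  all_goals norm_num [Instrument.noisy, uniformPrep]
end

section
/- If I₁ ~ Ĩ₁ and I₂ ~ Ĩ₂ are post-processing equivalent pairs of instruments, then I₁ and I₂ are parallel compatible if and only if Ĩ₁ and Ĩ₂ are parallel compatible. -/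
open Matrix
open scoped Kronecker BigOperators ComplexOrder

/-! If `J₁ ≲ I₁` through instruments `R x` and `J₂ ≲ I₂` through instruments `S y`, then a joint
instrument `K` of `I₁` and `I₂` yields the joint instrument
`(a, b) ↦ ∑ x y, ((R x)_a ⊗ (S y)_b) ∘ K_(x,y)` of `J₁` and `J₂`. Its operations are completely
positive because tensor products and composites of Kraus maps are Kraus maps, and its marginals are
the post-processed marginals of `K`, since tracing out the second factor of `Φ ⊗ Ψ` with `Ψ` trace
preserving leaves `Φ` applied to the partial trace. Applying this to both halves of the two
equivalences gives the theorem. -/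

noncomputable section

namespace QI

variable {n m k a b c d : Type*}

section LinearMap

variable {R M N P ι : Type*} [CommSemiring R] [AddCommMonoid M] [AddCommMonoid N]
  [AddCommMonoid P] [Module R M] [Module R N] [Module R P]

lemma _root_.LinearMap.finsetSum_comp (s : Finset ι) (f : ι → N →ₗ[R] P) (g : M →ₗ[R] N) :
    (∑ i ∈ s, f i) ∘ₗ g = ∑ i ∈ s, f i ∘ₗ g :=
  map_sum (LinearMap.lcomp R P g) f s

lemma _root_.LinearMap.comp_finsetSum (s : Finset ι) (g : N →ₗ[R] P) (f : ι → M →ₗ[R] N) :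
    g ∘ₗ (∑ i ∈ s, f i) = ∑ i ∈ s, g ∘ₗ f i :=
  map_sum (LinearMap.compRight R g) f s

end LinearMap

section Kraus

variable [Fintype n] [Fintype m]

lemma krausOp_apply (K : Matrix m n ℂ) (ρ : Matrix n n ℂ) : krausOp K ρ = K * ρ * Kᴴ := rfl

lemma krausOp_single_apply [DecidableEq n] (K : Matrix m n ℂ) (i j : n) (r s : m) :
    krausOp K (single i j 1) r s = K r i * star (K s j) := by
  simp [krausOp, mul_apply, single, conjTranspose_apply, ite_and]

lemma krausOp_comp_krausOp [Fintype k] (L : Matrix k m ℂ) (K : Matrix m n ℂ) :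
    krausOp L ∘ₗ krausOp K = krausOp (L * K) := by
  ext ρ : 1
  simp [krausOp, conjTranspose_mul, Matrix.mul_assoc]

variable [DecidableEq n]

lemma choi_sum {ι : Type*} (t : Finset ι) (Φ : ι → MatMap n m) :
    choi (∑ x ∈ t, Φ x) = ∑ x ∈ t, choi (Φ x) := by
  ext p q
  simp [choi, LinearMap.sum_apply, Matrix.sum_apply]

lemma isCP_sum {ι : Type*} (t : Finset ι) {Φ : ι → MatMap n m} (h : ∀ x ∈ t, IsCP (Φ x)) :
    IsCP (∑ x ∈ t, Φ x) := by
  rw [IsCP, choi_sum]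
  exact posSemidef_sum t h

lemma isCP_krausOp (K : Matrix m n ℂ) : IsCP (krausOp K) := by
  have hchoi : choi (krausOp K) = vecMulVec (fun p => K p.2 p.1) (star fun p => K p.2 p.1) := by
    ext p q
    simp [choi, krausOp_single_apply, vecMulVec_apply]
  rw [IsCP, hchoi]
  exact posSemidef_vecMulVec_self_star _

lemma isCP_sum_krausOp {ι : Type*} [Fintype ι] (K : ι → Matrix m n ℂ) :
    IsCP (∑ i, krausOp (K i)) :=
  isCP_sum _ fun i _ => isCP_krausOp (K i)

/-- The vectors of a rank-one decomposition of the Choi matrix, reshaped, are Kraus operators. -/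
lemma IsCP.exists_kraus {Φ : MatMap n m} (hΦ : IsCP Φ) :
    ∃ (r : ℕ) (K : Fin r → Matrix m n ℂ), Φ = ∑ i, krausOp (K i) := by
  obtain ⟨r, v, hv⟩ := posSemidef_iff_eq_sum_vecMulVec.mp hΦ
  refine ⟨r, fun i => Matrix.of fun s p => v i (p, s), ?_⟩
  refine Matrix.ext_linearMap ℂ fun p q => LinearMap.ext_ring ?_
  ext s t
  have := congrFun (congrFun hv (p, s)) (q, t)
  simp only [choi, of_apply, Matrix.sum_apply, vecMulVec_apply, Pi.star_apply] at this
  simp [this, Matrix.sum_apply, krausOp_single_apply]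

lemma IsCP.comp [Fintype k] [DecidableEq m] {Φ : MatMap n m} {Ψ : MatMap m k}
    (hΦ : IsCP Φ) (hΨ : IsCP Ψ) : IsCP (Ψ ∘ₗ Φ) := by
  obtain ⟨r, K, rfl⟩ := hΦ.exists_kraus
  obtain ⟨s, L, rfl⟩ := hΨ.exists_kraus
  have hkraus : (∑ j, krausOp (L j)) ∘ₗ ∑ i, krausOp (K i)
      = ∑ p : Fin s × Fin r, krausOp (L p.1 * K p.2) := by
    simp only [LinearMap.finsetSum_comp, LinearMap.comp_finsetSum, krausOp_comp_krausOp,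
      Fintype.sum_prod_type]
    exact Finset.sum_comm
  rw [hkraus]
  exact isCP_sum_krausOp _

end Kraus

section PartialTrace

variable [Fintype a] [Fintype b]

lemma ptrace₂_kronecker (A : Matrix a a ℂ) (B : Matrix b b ℂ) :
    ptrace₂ (A ⊗ₖ B) = B.trace • A := by
  ext i j
  simp [ptrace₂, trace, Finset.mul_sum, mul_comm]

lemma ptrace₁_kronecker (A : Matrix a a ℂ) (B : Matrix b b ℂ) :
    ptrace₁ (A ⊗ₖ B) = A.trace • B := by
  ext i j
  simp [ptrace₁, trace, Finset.sum_mul]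

lemma trace_ptrace₂ (M : Matrix (a × b) (a × b) ℂ) : (ptrace₂ M).trace = M.trace := by
  simp [ptrace₂, trace, Fintype.sum_prod_type]

end PartialTrace

section TensorMap

variable [Fintype a] [DecidableEq a] [Fintype b] [DecidableEq b]
  [Fintype c] [DecidableEq c] [Fintype d] [DecidableEq d]

/-- `(Φ, Ψ) ↦ Φ ⊗ Ψ`, with `Matrix (a × b) (a × b) ℂ` identified with
`Matrix a a ℂ ⊗ Matrix b b ℂ` through the Kronecker product. -/
def tensorMap : MatMap a c →ₗ[ℂ] MatMap b d →ₗ[ℂ] MatMap (a × b) (c × d) :=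
  (TensorProduct.mapBilinear (RingHom.id ℂ) _ _ _ _).compr₂
    (LinearEquiv.arrowCongr (kroneckerLinearEquiv a a b b ℂ)
      (kroneckerLinearEquiv c c d d ℂ)).toLinearMap

@[simp]
lemma tensorMap_kronecker (Φ : MatMap a c) (Ψ : MatMap b d) (A : Matrix a a ℂ)
    (B : Matrix b b ℂ) : tensorMap Φ Ψ (A ⊗ₖ B) = Φ A ⊗ₖ Ψ B := by
  simp [tensorMap]

lemma linearMap_ext_kronecker {M : Type*} [AddCommMonoid M] [Module ℂ M]
    {f g : Matrix (a × b) (a × b) ℂ →ₗ[ℂ] M} (h : ∀ A B, f (A ⊗ₖ B) = g (A ⊗ₖ B)) : f = g := by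
  have hcomp : f ∘ₗ (kroneckerLinearEquiv a a b b ℂ).toLinearMap
      = g ∘ₗ (kroneckerLinearEquiv a a b b ℂ).toLinearMap :=
    TensorProduct.ext' h
  exact (LinearEquiv.eq_comp_toLinearMap_iff _ _).mp hcomp

lemma tensorMap_krausOp (K : Matrix c a ℂ) (L : Matrix d b ℂ) :
    tensorMap (krausOp K) (krausOp L) = krausOp (K ⊗ₖ L) :=
  linearMap_ext_kronecker fun A B => by
    simp [krausOp_apply, mul_kronecker_mul, conjTranspose_kronecker]

lemma IsCP.tensorMap {Φ : MatMap a c} {Ψ : MatMap b d} (hΦ : IsCP Φ) (hΨ : IsCP Ψ) :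
    IsCP (tensorMap Φ Ψ) := by
  obtain ⟨r, K, rfl⟩ := hΦ.exists_kraus
  obtain ⟨s, L, rfl⟩ := hΨ.exists_kraus
  have hkraus : QI.tensorMap (∑ i, krausOp (K i)) (∑ j, krausOp (L j))
      = ∑ p : Fin r × Fin s, krausOp (K p.1 ⊗ₖ L p.2) := by
    simp only [map_sum, LinearMap.sum_apply, tensorMap_krausOp, Fintype.sum_prod_type]
    exact Finset.sum_comm
  rw [hkraus]
  exact isCP_sum_krausOp _

lemma ptrace₂_comp_tensorMap (Φ : MatMap a c) {Ψ : MatMap b d} (hΨ : IsTP Ψ) :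
    ptrace₂ ∘ₗ tensorMap Φ Ψ = Φ ∘ₗ ptrace₂ :=
  linearMap_ext_kronecker fun A B => by simp [ptrace₂_kronecker, hΨ B]

lemma ptrace₁_comp_tensorMap {Φ : MatMap a c} (Ψ : MatMap b d) (hΦ : IsTP Φ) :
    ptrace₁ ∘ₗ tensorMap Φ Ψ = Ψ ∘ₗ ptrace₁ :=
  linearMap_ext_kronecker fun A B => by simp [ptrace₁_kronecker, hΦ A]

lemma IsTP.tensorMap {Φ : MatMap a c} {Ψ : MatMap b d} (hΦ : IsTP Φ) (hΨ : IsTP Ψ) :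
    IsTP (tensorMap Φ Ψ) := fun M => by
  rw [← trace_ptrace₂, ← LinearMap.comp_apply, ptrace₂_comp_tensorMap _ hΨ,
    LinearMap.comp_apply, hΦ, trace_ptrace₂]

end TensorMap

section PostProcessing

variable {ι₁ ι₂ κ₁ κ₂ m₁ m₂ k₁ k₂ : Type*}
  [Fintype ι₁] [Fintype ι₂] [Fintype κ₁] [Fintype κ₂] [Fintype n]
  [Fintype m₁] [DecidableEq m₁] [Fintype m₂] [DecidableEq m₂]
  [Fintype k₁] [DecidableEq k₁] [Fintype k₂] [DecidableEq k₂]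

lemma isTP_sum_tensorMap_comp {K : ι₁ × ι₂ → MatMap n (m₁ × m₂)}
    {R : ι₁ → κ₁ → MatMap m₁ k₁} {S : ι₂ → κ₂ → MatMap m₂ k₂} (hK : IsTP (∑ p, K p))
    (hR : ∀ x, IsTP (∑ a, R x a)) (hS : ∀ y, IsTP (∑ b, S y b)) :
    IsTP (∑ p : κ₁ × κ₂, ∑ x, ∑ y, tensorMap (R x p.1) (S y p.2) ∘ₗ K (x, y)) := by
  have hsum : ∑ p : κ₁ × κ₂, ∑ x, ∑ y, tensorMap (R x p.1) (S y p.2) ∘ₗ K (x, y)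
      = ∑ x, ∑ y, tensorMap (∑ a, R x a) (∑ b, S y b) ∘ₗ K (x, y) := by
    rw [Finset.sum_comm]
    refine Finset.sum_congr rfl fun x _ => ?_
    rw [Finset.sum_comm]
    refine Finset.sum_congr rfl fun y _ => ?_
    simp only [map_sum, LinearMap.sum_apply, LinearMap.finsetSum_comp, Fintype.sum_prod_type]
    exact Finset.sum_comm
  intro ρ
  have hK' := hK ρ
  simp only [Fintype.sum_prod_type, LinearMap.sum_apply, trace_sum] at hK'
  simp only [hsum, LinearMap.sum_apply, LinearMap.comp_apply, trace_sum,
    ((hR _).tensorMap (hS _)) _, hK']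

variable [DecidableEq n]

def Instrument.localPostProcess (K : Instrument (ι₁ × ι₂) n (m₁ × m₂))
    (R : ι₁ → Instrument κ₁ m₁ k₁) (S : ι₂ → Instrument κ₂ m₂ k₂) :
    Instrument (κ₁ × κ₂) n (k₁ × k₂) where
  op p := ∑ x, ∑ y, tensorMap ((R x).op p.1) ((S y).op p.2) ∘ₗ K.op (x, y)
  cp p := isCP_sum _ fun x _ => isCP_sum _ fun y _ =>
    (K.cp (x, y)).comp (((R x).cp p.1).tensorMap ((S y).cp p.2))
  tp := isTP_sum_tensorMap_comp K.tp (fun x => (R x).tp) (fun y => (S y).tp)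

lemma Instrument.sum_ptrace₂_comp_localPostProcess (K : Instrument (ι₁ × ι₂) n (m₁ × m₂))
    (R : ι₁ → Instrument κ₁ m₁ k₁) (S : ι₂ → Instrument κ₂ m₂ k₂) (a : κ₁) :
    ∑ b, ptrace₂ ∘ₗ (K.localPostProcess R S).op (a, b)
      = ∑ x, (R x).op a ∘ₗ ∑ y, ptrace₂ ∘ₗ K.op (x, y) := by
  calc ∑ b, ptrace₂ ∘ₗ (K.localPostProcess R S).op (a, b)
      = ∑ x, ∑ y, (ptrace₂ ∘ₗ tensorMap ((R x).op a) (∑ b, (S y).op b)) ∘ₗ K.op (x, y) := by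
        simp only [Instrument.localPostProcess, map_sum, LinearMap.comp_finsetSum,
          LinearMap.finsetSum_comp, LinearMap.comp_assoc]
        rw [Finset.sum_comm]
        exact Finset.sum_congr rfl fun x _ => Finset.sum_comm
    _ = ∑ x, (R x).op a ∘ₗ ∑ y, ptrace₂ ∘ₗ K.op (x, y) := by
        simp only [ptrace₂_comp_tensorMap _ (S _).tp, LinearMap.comp_assoc,
          LinearMap.comp_finsetSum]

lemma Instrument.sum_ptrace₁_comp_localPostProcess (K : Instrument (ι₁ × ι₂) n (m₁ × m₂))
    (R : ι₁ → Instrument κ₁ m₁ k₁) (S : ι₂ → Instrument κ₂ m₂ k₂) (b : κ₂) :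
    ∑ a, ptrace₁ ∘ₗ (K.localPostProcess R S).op (a, b)
      = ∑ y, (S y).op b ∘ₗ ∑ x, ptrace₁ ∘ₗ K.op (x, y) := by
  calc ∑ a, ptrace₁ ∘ₗ (K.localPostProcess R S).op (a, b)
      = ∑ y, ∑ x, (ptrace₁ ∘ₗ tensorMap (∑ a, (R x).op a) ((S y).op b)) ∘ₗ K.op (x, y) := by
        simp only [Instrument.localPostProcess, map_sum, LinearMap.sum_apply,
          LinearMap.comp_finsetSum, LinearMap.finsetSum_comp, LinearMap.comp_assoc]
        rw [Finset.sum_comm, Finset.sum_congr rfl fun x _ => Finset.sum_comm, Finset.sum_comm]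
    _ = ∑ y, (S y).op b ∘ₗ ∑ x, ptrace₁ ∘ₗ K.op (x, y) := by
        simp only [ptrace₁_comp_tensorMap _ (R _).tp, LinearMap.comp_assoc,
          LinearMap.comp_finsetSum]

lemma ParallelCompatible.of_postProcessingOf {I₁ : Instrument ι₁ n m₁}
    {I₂ : Instrument ι₂ n m₂} {J₁ : Instrument κ₁ n k₁} {J₂ : Instrument κ₂ n k₂}
    (hI : ParallelCompatible I₁ I₂) (h₁ : PostProcessingOf J₁ I₁)
    (h₂ : PostProcessingOf J₂ I₂) : ParallelCompatible J₁ J₂ := by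
  obtain ⟨K, hK₁, hK₂⟩ := hI
  obtain ⟨R, hR⟩ := h₁
  obtain ⟨S, hS⟩ := h₂
  refine ⟨K.localPostProcess R S, fun a => ?_, fun b => ?_⟩
  · simp only [K.sum_ptrace₂_comp_localPostProcess, hK₁, hR]
  · simp only [K.sum_ptrace₁_comp_localPostProcess, hK₂, hS]

end PostProcessing

end QI

end

open QI in
/-- post-processing equivalent pairs are compatible iff each other is. -/
theorem postprocessing_equiv_compatibility_iff
    {ι₁ ι₂ κ₁ κ₂ n m₁ m₂ k₁ k₂ : Type*}
    [Fintype ι₁] [Fintype ι₂] [Fintype κ₁] [Fintype κ₂]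
    [Fintype n] [DecidableEq n]
    [Fintype m₁] [DecidableEq m₁] [Fintype m₂] [DecidableEq m₂]
    [Fintype k₁] [DecidableEq k₁] [Fintype k₂] [DecidableEq k₂]
    (I₁ : Instrument ι₁ n m₁) (I₂ : Instrument ι₂ n m₂)
    (J₁ : Instrument κ₁ n k₁) (J₂ : Instrument κ₂ n k₂)
    (h₁ : PostProcessingOf J₁ I₁ ∧ PostProcessingOf I₁ J₁)
    (h₂ : PostProcessingOf J₂ I₂ ∧ PostProcessingOf I₂ J₂) :
    (ParallelCompatible I₁ I₂ ↔ ParallelCompatible J₁ J₂) :=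
  ⟨fun h => h.of_postProcessingOf h₁.1 h₂.1, fun h => h.of_postProcessingOf h₁.2 h₂.2⟩
end
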